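/- Let l > 0 and l₀ = l/2, and let μ̄₁ < μ̄₂ < ... be the increasing enumeration of the positive zeros of Φ₀. Then for every positive integer j, μ̄_j = (π/l)·({j/2} + 2·⌊j/2⌋), where {x} denotes the fractional part and ⌊x⌋ the integer part of x. In particular, the μ̄_j grow linearly in j. -/

import Mathlib

/-- Φ₀(μ) = 2 sin(μ(l−l₀)) sin(μl₀) − sin(μl). -/
noncomputable def Phi0 (l l₀ μ : ℝ) : ℝ :=
  2 * Real.sin (μ * (l - l₀)) * Real.sin (μ * l₀) - Real.sin (μ * l)

/-- The candidate zero sequence. -/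
noncomputable def gs (l : ℝ) (j : ℕ) : ℝ :=
  Real.pi / l * (Int.fract ((j : ℝ) / 2) + 2 * (⌊(j : ℝ) / 2⌋ : ℝ))

lemma c_even (q : ℕ) :
    Int.fract (((2*q:ℕ):ℝ)/2) + 2*(⌊((2*q:ℕ):ℝ)/2⌋:ℝ) = 2*q := by
  push_cast
  rw [mul_comm (2:ℝ) q, mul_div_assoc]
  norm_num
  ring

lemma c_odd (q : ℕ) :
    Int.fract (((2*q+1:ℕ):ℝ)/2) + 2*(⌊((2*q+1:ℕ):ℝ)/2⌋:ℝ) = 2*q + 1/2 := by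
  push_cast
  have h : ((2:ℝ)*q+1)/2 = (q:ℤ) + 1/2 := by push_cast; ring
  rw [h, Int.fract_intCast_add, add_comm ((q:ℤ):ℝ), Int.floor_add_intCast]
  rw [Int.fract_eq_self.2 (by norm_num)]
  rw [show ⌊(1:ℝ)/2⌋ = 0 by norm_num]
  push_cast; ring

lemma gs_even (l : ℝ) (q : ℕ) : gs l (2*q) = Real.pi / l * (2*q) := by
  rw [gs, c_even]

lemma gs_odd (l : ℝ) (q : ℕ) : gs l (2*q+1) = Real.pi / l * (2*q + 1/2) := by
  rw [gs, c_odd]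

lemma gs_bounds (l : ℝ) (hl : 0 < l) (j : ℕ) :
    Real.pi / l * ((j:ℝ) - 1/2) ≤ gs l j ∧ gs l j ≤ Real.pi / l * j := by
  have hpl : 0 < Real.pi / l := div_pos Real.pi_pos hl
  rcases Nat.even_or_odd j with ⟨q, hq⟩ | ⟨q, hq⟩
  · have hj : j = 2*q := by omega
    subst hj
    rw [gs_even]
    constructor
    · apply mul_le_mul_of_nonneg_left _ hpl.le
      push_cast; linarith
    · apply mul_le_mul_of_nonneg_left _ hpl.le
      push_cast; linarith
  · subst hq
    rw [gs_odd]
    constructor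
    · apply mul_le_mul_of_nonneg_left _ hpl.le
      push_cast; linarith
    · apply mul_le_mul_of_nonneg_left _ hpl.le
      push_cast; linarith

lemma gs_mono (l : ℝ) (hl : 0 < l) {j k : ℕ} (h : j < k) : gs l j < gs l k := by
  have hpl : 0 < Real.pi / l := div_pos Real.pi_pos hl
  have h1 := (gs_bounds l hl j).2
  have h2 := (gs_bounds l hl k).1
  have hjk : (j:ℝ) + 1 ≤ (k:ℝ) := by exact_mod_cast h
  nlinarith

lemma gs_pos (l : ℝ) (hl : 0 < l) {j : ℕ} (hj : 1 ≤ j) : 0 < gs l j := by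
  have hpl : 0 < Real.pi / l := div_pos Real.pi_pos hl
  have h1 := (gs_bounds l hl j).1
  have hj' : (1:ℝ) ≤ (j:ℝ) := by exact_mod_cast hj
  nlinarith

lemma phi_half (l x : ℝ) :
    Phi0 l (l/2) x = 1 - Real.cos (x*l) - Real.sin (x*l) := by
  unfold Phi0
  have h1 : x * (l - l/2) = x * (l/2) := by ring
  have h2 : x * l = 2 * (x * (l/2)) := by ring
  rw [h1, h2, Real.cos_two_mul, Real.sin_two_mul]
  nlinarith [Real.sin_sq_add_cos_sq (x * (l/2))]

lemma sin_two_pi_nat (q : ℕ) : Real.sin (q*(2*Real.pi)) = 0 := by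
  rw [show (q:ℝ)*(2*Real.pi) = (2*q:ℕ)*Real.pi by push_cast; ring, Real.sin_nat_mul_pi]

lemma gs_zero (l : ℝ) (hl : 0 < l) (j : ℕ) : Phi0 l (l/2) (gs l j) = 0 := by
  rw [phi_half]
  have hl' : l ≠ 0 := hl.ne'
  rcases Nat.even_or_odd j with ⟨q, hq⟩ | ⟨q, hq⟩
  · have : j = 2*q := by omega
    subst this
    rw [gs_even]
    have : Real.pi / l * (2*q) * l = q * (2*Real.pi) := by field_simp
    rw [this, Real.cos_nat_mul_two_pi, sin_two_pi_nat]
    norm_num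
  · subst hq
    rw [gs_odd]
    have : Real.pi / l * (2*q + 1/2) * l = q * (2*Real.pi) + Real.pi/2 := by
      field_simp
    rw [this, Real.cos_add, Real.sin_add, Real.cos_nat_mul_two_pi, sin_two_pi_nat,
      Real.cos_pi_div_two, Real.sin_pi_div_two]
    norm_num

lemma classify (l : ℝ) (hl : 0 < l) (x : ℝ) (hx : 0 < x)
    (h : Phi0 l (l/2) x = 0) : ∃ j : ℕ, 1 ≤ j ∧ gs l j = x := by
  rw [phi_half] at h
  have hl' : l ≠ 0 := hl.ne'
  set a := x * l / 2 with ha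
  have h2 : x * l = 2 * a := by rw [ha]; ring
  rw [h2, Real.cos_two_mul, Real.sin_two_mul] at h
  have hsc : Real.sin a * (Real.sin a - Real.cos a) = 0 := by
    nlinarith [Real.sin_sq_add_cos_sq a]
  have hapos : 0 < a := by
    rw [ha]; positivity
  rcases mul_eq_zero.1 hsc with hs | hs
  · -- sin a = 0 : a = nπ, n ≥ 1
    obtain ⟨n, hn⟩ := Real.sin_eq_zero_iff.1 hs
    have hn1 : 1 ≤ n := by
      by_contra hc
      push_neg at hc
      have : (n:ℝ) ≤ 0 := by exact_mod_cast (by omega : n ≤ 0)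
      nlinarith [Real.pi_pos]
    refine ⟨2 * n.toNat, by omega, ?_⟩
    rw [gs_even]
    have hnn : ((n.toNat : ℕ) : ℝ) = (n : ℝ) := by
      exact_mod_cast congrArg (Int.cast : ℤ → ℝ) (Int.toNat_of_nonneg (by omega : (0:ℤ) ≤ n))
    rw [hnn]
    have hxl : x * l = 2 * ((n:ℝ) * Real.pi) := by rw [h2, ← hn]
    field_simp
    linear_combination (-1 : ℝ) * hxl
  · -- sin a = cos a : a = π/4 + nπ, n ≥ 0
    have hs0 : Real.sin (a - Real.pi/4) = 0 := by
      rw [Real.sin_sub, Real.cos_pi_div_four, Real.sin_pi_div_four]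
      linear_combination (Real.sqrt 2 / 2) * hs
    obtain ⟨n, hn⟩ := Real.sin_eq_zero_iff.1 hs0
    have hn0 : 0 ≤ n := by
      by_contra hc
      push_neg at hc
      have : (n:ℝ) ≤ -1 := by exact_mod_cast (by omega : n ≤ -1)
      nlinarith [Real.pi_pos]
    refine ⟨2 * n.toNat + 1, by omega, ?_⟩
    rw [gs_odd]
    have hnn : ((n.toNat : ℕ) : ℝ) = (n : ℝ) := by
      exact_mod_cast congrArg (Int.cast : ℤ → ℝ) (Int.toNat_of_nonneg hn0)
    rw [hnn]
    have hax : a = (n:ℝ) * Real.pi + Real.pi/4 := by linarith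
    have hxl : x * l = 2*(n:ℝ)*Real.pi + Real.pi/2 := by rw [h2, hax]; ring
    field_simp
    linear_combination (-2 : ℝ) * hxl

/-- For `l₀ = l/2`, the `j`-th positive zero of `Φ₀` (counting from `j = 1`) is
`μ̄ⱼ = (π/l)·({j/2} + 2⌊j/2⌋)`. -/
theorem Phi0_pos_zeros_formula (l : ℝ) (hl : 0 < l)
    (μb : ℕ → ℝ)
    (hmono : ∀ j k : ℕ, 1 ≤ j → j < k → μb j < μb k)
    (hpos : ∀ j : ℕ, 1 ≤ j → 0 < μb j)
    (hzero : ∀ j : ℕ, 1 ≤ j → Phi0 l (l / 2) (μb j) = 0)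
    (hall : ∀ x : ℝ, 0 < x → Phi0 l (l / 2) x = 0 → ∃ j : ℕ, 1 ≤ j ∧ μb j = x) :
    ∀ j : ℕ, 1 ≤ j →
      μb j = Real.pi / l * (Int.fract ((j : ℝ) / 2) + 2 * (⌊(j : ℝ) / 2⌋ : ℝ)) := by
  suffices H : ∀ j : ℕ, 1 ≤ j → μb j = gs l j by
    intro j hj; exact H j hj
  intro j
  induction j using Nat.strong_induction_on with
  | _ j IH =>
    intro hj
    obtain ⟨k, hk1, hk⟩ := classify l hl (μb j) (hpos j hj) (hzero j hj)
    obtain ⟨m, hm1, hm⟩ := hall (gs l j) (gs_pos l hl hj) (gs_zero l hl j)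
    rcases lt_trichotomy k j with h | h | h
    · exfalso
      have e1 := IH k h hk1
      have e2 := hmono k j hk1 h
      linarith
    · rw [h] at hk; exact hk.symm
    · rcases lt_trichotomy m j with h2 | h2 | h2
      · exfalso
        have e1 := IH m h2 hm1
        have e2 := gs_mono l hl h2
        linarith
      · rw [h2] at hm; exact hm
      · exfalso
        have h3 := hmono j m hj h2
        have h4 := gs_mono l hl h
        linarith
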